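/- The connection 1-form α = i dζ/ζ - 3i ∂ log(-⟨z,z⟩) on the circle bundle over B² is invariant under the action of SU(2,1) given by M·(z,ζ) = (Mz, ζ·det J(M,z)). -/

import Mathlib

open Matrix

/-- The connection 1-form `α = i dζ/ζ - 3i ∂ log(-⟨z,z⟩)` on (the circle bundle over) `B²`,
as a 1-form on `ℂ × ℂ × ℂ` (coordinates `z₁, z₂, ζ`) evaluated at the point `p` on the
tangent vector `u`. -/
noncomputable def alphaForm (p u : ℂ × ℂ × ℂ) : ℂ :=
  Complex.I * u.2.2 / p.2.2 -
    3 * Complex.I * ((starRingEnd ℂ) p.1 * u.1 + (starRingEnd ℂ) p.2.1 * u.2.1)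
      / (p.1 * (starRingEnd ℂ) p.1 + p.2.1 * (starRingEnd ℂ) p.2.1 - 1)

/-- The action of `M ∈ SU(2,1)` on the bundle: `M·(z,ζ) = (Mz, ζ · det J(M,z))`,
where `det J(M,z) = c(z)³` with `c(z) = (m₃₁z₁ + m₃₂z₂ + m₃₃)⁻¹`. -/
noncomputable def bundleAct (M : Matrix (Fin 3) (Fin 3) ℂ) (p : ℂ × ℂ × ℂ) : ℂ × ℂ × ℂ :=
  ((M 0 0 * p.1 + M 0 1 * p.2.1 + M 0 2) / (M 2 0 * p.1 + M 2 1 * p.2.1 + M 2 2),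
   (M 1 0 * p.1 + M 1 1 * p.2.1 + M 1 2) / (M 2 0 * p.1 + M 2 1 * p.2.1 + M 2 2),
   p.2.2 / (M 2 0 * p.1 + M 2 1 * p.2.1 + M 2 2) ^ 3)

open ComplexConjugate in
private lemma myDiv {E : Type*} [NormedAddCommGroup E] [NormedSpace ℂ E] {f g : E → ℂ}
    {f' g' : E →L[ℂ] ℂ} {x : E} (hf : HasFDerivAt f f' x) (hg : HasFDerivAt g g' x)
    (hgx : g x ≠ 0) :
    HasFDerivAt (fun y => f y / g y) ((g x)⁻¹ • f' - (f x / g x ^ 2) • g') x := by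
  have hinv : HasFDerivAt (fun y => (g y)⁻¹)
      ((ContinuousLinearMap.smulRight (1 : ℂ →L[ℂ] ℂ) (-(g x ^ 2)⁻¹)).comp g') x :=
    (hasFDerivAt_inv hgx).comp x hg
  have h2 := hf.mul hinv
  simp only [div_eq_mul_inv]
  refine h2.congr_fderiv (ContinuousLinearMap.ext fun v => ?_)
  simp only [ContinuousLinearMap.add_apply, ContinuousLinearMap.smul_apply,
    ContinuousLinearMap.comp_apply, ContinuousLinearMap.smulRight_apply,
    ContinuousLinearMap.one_apply, ContinuousLinearMap.sub_apply, smul_eq_mul, pow_two]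
  field_simp
  ring

private lemma bundleAct_fderiv (M : Matrix (Fin 3) (Fin 3) ℂ) (p u : ℂ × ℂ × ℂ)
    (hW : M 2 0 * p.1 + M 2 1 * p.2.1 + M 2 2 ≠ 0) :
    fderiv ℝ (bundleAct M) p u =
      (((M 0 0 * u.1 + M 0 1 * u.2.1) * (M 2 0 * p.1 + M 2 1 * p.2.1 + M 2 2)
          - (M 0 0 * p.1 + M 0 1 * p.2.1 + M 0 2) * (M 2 0 * u.1 + M 2 1 * u.2.1))
        / (M 2 0 * p.1 + M 2 1 * p.2.1 + M 2 2) ^ 2,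
       ((M 1 0 * u.1 + M 1 1 * u.2.1) * (M 2 0 * p.1 + M 2 1 * p.2.1 + M 2 2)
          - (M 1 0 * p.1 + M 1 1 * p.2.1 + M 1 2) * (M 2 0 * u.1 + M 2 1 * u.2.1))
        / (M 2 0 * p.1 + M 2 1 * p.2.1 + M 2 2) ^ 2,
       (u.2.2 * (M 2 0 * p.1 + M 2 1 * p.2.1 + M 2 2)
          - 3 * p.2.2 * (M 2 0 * u.1 + M 2 1 * u.2.1))
        / (M 2 0 * p.1 + M 2 1 * p.2.1 + M 2 2) ^ 4) := by
  set l1 : (ℂ × ℂ × ℂ) →L[ℂ] ℂ := ContinuousLinearMap.fst ℂ ℂ (ℂ × ℂ) with hl1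
  set l2 : (ℂ × ℂ × ℂ) →L[ℂ] ℂ :=
    (ContinuousLinearMap.fst ℂ ℂ ℂ).comp (ContinuousLinearMap.snd ℂ ℂ (ℂ × ℂ)) with hl2
  set l3 : (ℂ × ℂ × ℂ) →L[ℂ] ℂ :=
    (ContinuousLinearMap.snd ℂ ℂ ℂ).comp (ContinuousLinearMap.snd ℂ ℂ (ℂ × ℂ)) with hl3
  have h1 : HasFDerivAt (fun q : ℂ × ℂ × ℂ => q.1) l1 p := hasFDerivAt_fst
  have h2 : HasFDerivAt (fun q : ℂ × ℂ × ℂ => q.2.1) l2 p :=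
    hasFDerivAt_fst.comp p hasFDerivAt_snd
  have h3 : HasFDerivAt (fun q : ℂ × ℂ × ℂ => q.2.2) l3 p :=
    hasFDerivAt_snd.comp p hasFDerivAt_snd
  have haff : ∀ i : Fin 3, HasFDerivAt
      (fun q : ℂ × ℂ × ℂ => M i 0 * q.1 + M i 1 * q.2.1 + M i 2)
      (M i 0 • l1 + M i 1 • l2) p := fun i =>
    ((h1.const_mul (M i 0)).add (h2.const_mul (M i 1))).add_const (M i 2)
  have hWfd := haff 2
  have hW3 : HasFDerivAt (fun q : ℂ × ℂ × ℂ =>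
      (M 2 0 * q.1 + M 2 1 * q.2.1 + M 2 2) ^ 3)
      ((3 * (M 2 0 * p.1 + M 2 1 * p.2.1 + M 2 2) ^ 2) • (M 2 0 • l1 + M 2 1 • l2)) p := by
    have hm := (hWfd.mul hWfd).mul hWfd
    have heq : (fun q : ℂ × ℂ × ℂ => (M 2 0 * q.1 + M 2 1 * q.2.1 + M 2 2) ^ 3)
        = fun q => (M 2 0 * q.1 + M 2 1 * q.2.1 + M 2 2) * (M 2 0 * q.1 + M 2 1 * q.2.1 + M 2 2)
            * (M 2 0 * q.1 + M 2 1 * q.2.1 + M 2 2) := by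
      funext q; ring
    rw [heq]
    refine hm.congr_fderiv (ContinuousLinearMap.ext fun v => ?_)
    simp only [ContinuousLinearMap.add_apply, ContinuousLinearMap.smul_apply, smul_eq_mul, Pi.mul_apply]
    ring
  have hfd0 := HasFDerivAt.prodMk (myDiv (haff 0) hWfd hW)
    (HasFDerivAt.prodMk (myDiv (haff 1) hWfd hW) (myDiv h3 hW3 (pow_ne_zero 3 hW)))
  have hfd : HasFDerivAt (bundleAct M) _ p := hfd0
  have := (hfd.restrictScalars ℝ).fderiv
  rw [this]
  simp only [ContinuousLinearMap.coe_restrictScalars', ContinuousLinearMap.prod_apply,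
    ContinuousLinearMap.sub_apply, ContinuousLinearMap.smul_apply,
    ContinuousLinearMap.add_apply, hl1, hl2, hl3, ContinuousLinearMap.comp_apply,
    ContinuousLinearMap.coe_fst', ContinuousLinearMap.coe_snd', smul_eq_mul]
  refine Prod.ext ?_ (Prod.ext ?_ ?_)
  · show _ = _
    field_simp
  · show _ = _
    field_simp
  · show _ = _
    field_simp

set_option maxHeartbeats 2000000 in
open ComplexConjugate in
/-- The connection form `α = i dζ/ζ - 3i ∂ log(-⟨z,z⟩)` is invariant under the action
of `SU(2,1)` given by `M·(z,ζ) = (Mz, ζ det J(M,z))`. -/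
theorem stmt16 (M : Matrix (Fin 3) (Fin 3) ℂ)
    (hM : M.det = 1 ∧ Mᴴ * Matrix.diagonal ![1, 1, -1] * M = Matrix.diagonal ![1, 1, -1])
    (p : ℂ × ℂ × ℂ) (hp : ‖p.1‖ ^ 2 + ‖p.2.1‖ ^ 2 < 1) (hζ : p.2.2 ≠ 0) :
    ∀ u : ℂ × ℂ × ℂ,
      alphaForm (bundleAct M p) (fderiv ℝ (bundleAct M) p u) = alphaForm p u := by
  intro u
  obtain ⟨-, hJ⟩ := hM
  have key : ∀ j k : Fin 3, conj (M 0 j) * M 0 k + conj (M 1 j) * M 1 k - conj (M 2 j) * M 2 k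
      = Matrix.diagonal ![1, 1, -1] j k := by
    intro j k
    have h := congrFun (congrFun hJ j) k
    simp [Matrix.mul_apply, Matrix.diagonal_apply, Fin.sum_univ_three,
      Matrix.conjTranspose_apply, Complex.star_def] at h
    rw [Matrix.diagonal_apply]
    linear_combination h
  have h00 : conj (M 0 0) * M 0 0 + conj (M 1 0) * M 1 0 - conj (M 2 0) * M 2 0 = 1 := by
    simpa using key 0 0
  have h01 : conj (M 0 0) * M 0 1 + conj (M 1 0) * M 1 1 - conj (M 2 0) * M 2 1 = 0 := by
    simpa using key 0 1
  have h02 : conj (M 0 0) * M 0 2 + conj (M 1 0) * M 1 2 - conj (M 2 0) * M 2 2 = 0 := by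
    simpa using key 0 2
  have h10 : conj (M 0 1) * M 0 0 + conj (M 1 1) * M 1 0 - conj (M 2 1) * M 2 0 = 0 := by
    simpa using key 1 0
  have h11 : conj (M 0 1) * M 0 1 + conj (M 1 1) * M 1 1 - conj (M 2 1) * M 2 1 = 1 := by
    simpa using key 1 1
  have h12 : conj (M 0 1) * M 0 2 + conj (M 1 1) * M 1 2 - conj (M 2 1) * M 2 2 = 0 := by
    simpa using key 1 2
  have h20 : conj (M 0 2) * M 0 0 + conj (M 1 2) * M 1 0 - conj (M 2 2) * M 2 0 = 0 := by
    simpa using key 2 0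
  have h21 : conj (M 0 2) * M 0 1 + conj (M 1 2) * M 1 1 - conj (M 2 2) * M 2 1 = 0 := by
    simpa using key 2 1
  have h22 : conj (M 0 2) * M 0 2 + conj (M 1 2) * M 1 2 - conj (M 2 2) * M 2 2 = -1 := by
    simpa using key 2 2
  have he0 : (M 0 0 * p.1 + M 0 1 * p.2.1 + M 0 2) * conj (M 0 0 * p.1 + M 0 1 * p.2.1 + M 0 2)
      + (M 1 0 * p.1 + M 1 1 * p.2.1 + M 1 2) * conj (M 1 0 * p.1 + M 1 1 * p.2.1 + M 1 2)
      - (M 2 0 * p.1 + M 2 1 * p.2.1 + M 2 2) * conj (M 2 0 * p.1 + M 2 1 * p.2.1 + M 2 2)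
      = p.1 * conj p.1 + p.2.1 * conj p.2.1 - 1 := by
    simp only [map_add, _root_.map_mul]
    linear_combination conj p.1 * p.1 * h00 + conj p.1 * p.2.1 * h01 + conj p.1 * h02 +
      conj p.2.1 * p.1 * h10 + conj p.2.1 * p.2.1 * h11 + conj p.2.1 * h12 +
      p.1 * h20 + p.2.1 * h21 + h22
  have he1 : conj (M 0 0 * p.1 + M 0 1 * p.2.1 + M 0 2) * (M 0 0 * u.1 + M 0 1 * u.2.1)
      + conj (M 1 0 * p.1 + M 1 1 * p.2.1 + M 1 2) * (M 1 0 * u.1 + M 1 1 * u.2.1)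
      - conj (M 2 0 * p.1 + M 2 1 * p.2.1 + M 2 2) * (M 2 0 * u.1 + M 2 1 * u.2.1)
      = conj p.1 * u.1 + conj p.2.1 * u.2.1 := by
    simp only [map_add, _root_.map_mul]
    linear_combination conj p.1 * u.1 * h00 + conj p.1 * u.2.1 * h01 +
      conj p.2.1 * u.1 * h10 + conj p.2.1 * u.2.1 * h11 + u.1 * h20 + u.2.1 * h21
  have hDR : Complex.normSq p.1 + Complex.normSq p.2.1 - 1 < 0 := by
    have e1 : Complex.normSq p.1 = ‖p.1‖ ^ 2 := by
      rw [Complex.normSq_eq_norm_sq]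
    have e2 : Complex.normSq p.2.1 = ‖p.2.1‖ ^ 2 := by
      rw [Complex.normSq_eq_norm_sq]
    rw [e1, e2]; linarith
  have hW : M 2 0 * p.1 + M 2 1 * p.2.1 + M 2 2 ≠ 0 := by
    have hR : Complex.normSq (M 0 0 * p.1 + M 0 1 * p.2.1 + M 0 2)
        + Complex.normSq (M 1 0 * p.1 + M 1 1 * p.2.1 + M 1 2)
        - Complex.normSq (M 2 0 * p.1 + M 2 1 * p.2.1 + M 2 2)
        = Complex.normSq p.1 + Complex.normSq p.2.1 - 1 := by
      have h := he0
      rw [Complex.mul_conj, Complex.mul_conj, Complex.mul_conj, Complex.mul_conj,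
        Complex.mul_conj] at h
      exact_mod_cast h
    intro h0
    rw [h0] at hR
    simp at hR
    nlinarith [Complex.normSq_nonneg (M 0 0 * p.1 + M 0 1 * p.2.1 + M 0 2),
      Complex.normSq_nonneg (M 1 0 * p.1 + M 1 1 * p.2.1 + M 1 2)]
  have hWc : conj (M 2 0 * p.1 + M 2 1 * p.2.1 + M 2 2) ≠ 0 := by
    intro h0
    apply hW
    have h1 := congrArg (starRingEnd ℂ) h0
    simpa using h1
  have hD : (p.1 * conj p.1 + p.2.1 * conj p.2.1 - 1 : ℂ) ≠ 0 := by
    have h : (p.1 * conj p.1 + p.2.1 * conj p.2.1 - 1 : ℂ)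
        = ((Complex.normSq p.1 + Complex.normSq p.2.1 - 1 : ℝ) : ℂ) := by
      push_cast [Complex.mul_conj]; ring
    rw [h]
    exact_mod_cast ne_of_lt hDR
  rw [bundleAct_fderiv M p u hW]
  simp only [alphaForm, bundleAct, map_div₀]
  set A := M 0 0 * p.1 + M 0 1 * p.2.1 + M 0 2 with hAd
  set B := M 1 0 * p.1 + M 1 1 * p.2.1 + M 1 2 with hBd
  set W := M 2 0 * p.1 + M 2 1 * p.2.1 + M 2 2 with hWd
  set Au := M 0 0 * u.1 + M 0 1 * u.2.1 with hAud
  set Bu := M 1 0 * u.1 + M 1 1 * u.2.1 with hBud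
  set Wu := M 2 0 * u.1 + M 2 1 * u.2.1 with hWud
  set cA := conj A with hcAd
  set cB := conj B with hcBd
  set cW := conj W with hcWd
  set c1 := conj p.1 with hc1d
  set c2 := conj p.2.1 with hc2d
  clear_value A B W Au Bu Wu cA cB cW c1 c2
  have hDq : A / W * (cA / cW) + B / W * (cB / cW) - 1
      = (p.1 * c1 + p.2.1 * c2 - 1) / (W * cW) := by
    field_simp
    linear_combination he0
  rw [hDq]
  have hsum : cA / cW * ((Au * W - A * Wu) / W ^ 2) + cB / cW * ((Bu * W - B * Wu) / W ^ 2)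
      = ((c1 * u.1 + c2 * u.2.1) * W - (p.1 * c1 + p.2.1 * c2 - 1) * Wu) / (cW * W ^ 2) := by
    rw [div_mul_div_comm, div_mul_div_comm, ← add_div]
    congr 1
    linear_combination W * he1 - Wu * he0
  rw [hsum]
  field_simp [hW, hWc, hζ, hD]
  have hD' : c1 * p.1 + c2 * p.2.1 - 1 ≠ 0 := by rw [mul_comm c1, mul_comm c2]; exact hD
  field_simp [hD']
  ring
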